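/- arXiv:1504.04682 — 2 statements merged into one kernel-verified Lean document; each statement's English description precedes it below -/
import Mathlib

section
/- Assume f_b has two distinct roots x_{b1} < x_{b2}. Then there exists ã* ∈ (x_{b1}, x_{b2}) satisfying F(ã*)·e^{ã*} = F'(ã*)·(e^{ã*} + c_b) if and only if |∫_{−∞}^{x_{b1}} Ψ(x)·e^x·f_b(x) dx| < ∫_{x_{b1}}^{x_{b2}} Ψ(x)·e^x·f_b(x) dx. -/
/-!
With `w(a) = F(a) eᵃ - F'(a) (eᵃ + c_b)`, the smooth-fit equation asks for a zero of `w`, i.e. of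
`φ = w / W`. The ODE `(σ²/2) F'' + μ (θ - x) F' = r F` together with Abel's identity
`W' = (2μ (x - θ) / σ²) W` gives `φ' = Ψ eˣ f_b`, and `φ → 0` at `-∞` because `F, F' → 0` there
while `W` decreases on `(-∞, θ]`. As `f_b` is strictly concave with zeros `x_{b1} < x_{b2}`, `φ`
decreases on `(-∞, x_{b1}]` and increases on `[x_{b1}, x_{b2}]`. Hence the first integral is
`φ(x_{b1}) < 0`, the second is `φ(x_{b2}) - φ(x_{b1})`, and the inequality says `φ(x_{b2}) > 0`,
which by monotonicity and the intermediate value theorem is the existence of the zero.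
-/

open Real MeasureTheory Set Filter Topology

noncomputable def parabolicIntegrand (q a u : ℝ) : ℝ := u ^ q * exp (a * u - u ^ 2 / 2)

/-- Up to the factor `Γ(q + 1) exp (a² / 4)`, this is the parabolic cylinder function
`D_{-(q+1)}(-a)`. -/
noncomputable def parabolicIntegral (q a : ℝ) : ℝ := ∫ u in Ioi 0, parabolicIntegrand q a u

section ParabolicIntegral

variable {q : ℝ}

theorem parabolicIntegrand_pos (q a : ℝ) {u : ℝ} (hu : 0 < u) : 0 < parabolicIntegrand q a u :=
  mul_pos (rpow_pos_of_pos hu q) (exp_pos _)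

theorem measurable_parabolicIntegrand (q a : ℝ) : Measurable (parabolicIntegrand q a) := by
  unfold parabolicIntegrand
  fun_prop

theorem parabolicIntegrand_le (q a : ℝ) {u : ℝ} (hu : 0 < u) :
    parabolicIntegrand q a u ≤ exp (a ^ 2) * (u ^ q * exp (-4⁻¹ * u ^ 2)) := by
  have : a * u - u ^ 2 / 2 ≤ a ^ 2 + -4⁻¹ * u ^ 2 := by nlinarith [sq_nonneg (a - u / 2)]
  calc parabolicIntegrand q a u ≤ u ^ q * exp (a ^ 2 + -4⁻¹ * u ^ 2) :=
        mul_le_mul_of_nonneg_left (exp_le_exp.2 this) (rpow_pos_of_pos hu q).le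
    _ = _ := by rw [exp_add]; ring

theorem parabolicIntegrand_mono {a b u : ℝ} (hab : a ≤ b) (hu : 0 < u) :
    parabolicIntegrand q a u ≤ parabolicIntegrand q b u := by
  unfold parabolicIntegrand
  gcongr

theorem integrableOn_parabolicIntegrand (hq : -1 < q) (a : ℝ) :
    IntegrableOn (parabolicIntegrand q a) (Ioi 0) := by
  refine ((integrableOn_rpow_mul_exp_neg_mul_sq (b := 4⁻¹) (by norm_num) hq).const_mul
    (exp (a ^ 2))).mono' (measurable_parabolicIntegrand q a).aestronglyMeasurable ?_
  filter_upwards [ae_restrict_mem measurableSet_Ioi] with u hu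
  rw [norm_of_nonneg (parabolicIntegrand_pos q a hu).le]
  exact parabolicIntegrand_le q a hu

theorem parabolicIntegral_pos (hq : -1 < q) (a : ℝ) : 0 < parabolicIntegral q a := by
  refine (setIntegral_pos_iff_support_of_nonneg_ae ?_ (integrableOn_parabolicIntegrand hq a)).2 ?_
  · filter_upwards [ae_restrict_mem measurableSet_Ioi] with u hu
    exact (parabolicIntegrand_pos q a hu).le
  · have : Ioi (0 : ℝ) ⊆ Function.support (parabolicIntegrand q a) :=
      fun u hu => (parabolicIntegrand_pos q a hu).ne'
    simp [inter_eq_right.2 this]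

theorem hasDerivAt_parabolicIntegrand_param (q a : ℝ) {u : ℝ} (hu : 0 < u) :
    HasDerivAt (fun a => parabolicIntegrand q a u) (parabolicIntegrand (q + 1) a u) a := by
  have := ((hasDerivAt_mul_const (x := a) u).sub_const (u ^ 2 / 2)).exp.const_mul (u ^ q)
  refine this.congr_deriv ?_
  unfold parabolicIntegrand
  rw [rpow_add_one hu.ne']
  ring

theorem hasDerivAt_parabolicIntegrand_succ (q a : ℝ) {u : ℝ} (hu : 0 < u) :
    HasDerivAt (parabolicIntegrand (q + 1) a)
      ((q + 1) * parabolicIntegrand q a u + a * parabolicIntegrand (q + 1) a u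
        - parabolicIntegrand (q + 2) a u) u := by
  have hpow : HasDerivAt (fun u => u ^ (q + 1)) ((q + 1) * u ^ q) u := by
    simpa using hasDerivAt_rpow_const (x := u) (p := q + 1) (Or.inl hu.ne')
  have hexp : HasDerivAt (fun u => exp (a * u - u ^ 2 / 2))
      (exp (a * u - u ^ 2 / 2) * (a - u)) u := by
    have := ((hasDerivAt_id u).const_mul a).sub ((hasDerivAt_pow 2 u).div_const 2)
    exact (this.congr_deriv (by simp)).exp
  refine (hpow.mul hexp).congr_deriv ?_
  unfold parabolicIntegrand
  rw [show q + 2 = q + 1 + 1 by ring, rpow_add_one hu.ne' (q + 1), rpow_add_one hu.ne' q]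
  ring

theorem hasDerivAt_parabolicIntegral (hq : -1 < q) (a : ℝ) :
    HasDerivAt (parabolicIntegral q) (parabolicIntegral (q + 1) a) a := by
  refine (hasDerivAt_integral_of_dominated_loc_of_deriv_le (Metric.ball_mem_nhds a one_pos)
    (Eventually.of_forall fun b => (measurable_parabolicIntegrand q b).aestronglyMeasurable)
    (integrableOn_parabolicIntegrand hq a)
    (measurable_parabolicIntegrand (q + 1) a).aestronglyMeasurable ?_
    (integrableOn_parabolicIntegrand (q := q + 1) (by linarith) (a + 1)) ?_).2
  · filter_upwards [ae_restrict_mem measurableSet_Ioi] with u hu b hb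
    rw [norm_of_nonneg (parabolicIntegrand_pos _ b hu).le]
    exact parabolicIntegrand_mono (by linarith [(abs_lt.1 (mem_ball_iff_norm.1 hb)).2]) hu
  · filter_upwards [ae_restrict_mem measurableSet_Ioi] with u hu b _
    exact hasDerivAt_parabolicIntegrand_param q b hu

theorem tendsto_parabolicIntegral_atBot (hq : -1 < q) :
    Tendsto (parabolicIntegral q) atBot (𝓝 0) := by
  rw [← integral_zero ℝ ℝ]
  refine tendsto_integral_filter_of_dominated_convergence (parabolicIntegrand q 0)
    (Eventually.of_forall fun a => (measurable_parabolicIntegrand q a).aestronglyMeasurable) ?_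
    (integrableOn_parabolicIntegrand hq 0) ?_
  · filter_upwards [eventually_le_atBot 0] with a ha
    filter_upwards [ae_restrict_mem measurableSet_Ioi] with u hu
    rw [norm_of_nonneg (parabolicIntegrand_pos q a hu).le]
    exact parabolicIntegrand_mono ha hu
  · filter_upwards [ae_restrict_mem measurableSet_Ioi] with u (hu : 0 < u)
    have : Tendsto (fun a => a * u - u ^ 2 / 2) atBot atBot :=
      tendsto_atBot_add_const_right _ _ (tendsto_id.atBot_mul_const hu)
    simpa [parabolicIntegrand] using (tendsto_exp_atBot.comp this).const_mul (u ^ q)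

theorem parabolicIntegral_add_two (hq : -1 < q) (a : ℝ) :
    parabolicIntegral (q + 2) a =
      (q + 1) * parabolicIntegral q a + a * parabolicIntegral (q + 1) a := by
  have hq₁ : 0 < q + 1 := by linarith
  have hint₀ := (integrableOn_parabolicIntegrand hq a).const_mul (q + 1)
  have hint₁ := integrableOn_parabolicIntegrand (q := q + 1) (by linarith) a
  have hint₂ := integrableOn_parabolicIntegrand (q := q + 2) (by linarith) a
  have hint' : IntegrableOn (fun u => (q + 1) * parabolicIntegrand q a u
      + a * parabolicIntegrand (q + 1) a u - parabolicIntegrand (q + 2) a u) (Ioi 0) :=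
    (hint₀.add (hint₁.const_mul a)).sub hint₂
  have hderiv : ∀ u ∈ Ioi (0 : ℝ), HasDerivAt (parabolicIntegrand (q + 1) a) _ u :=
    fun u hu => hasDerivAt_parabolicIntegrand_succ q a hu
  have hcont : ContinuousWithinAt (parabolicIntegrand (q + 1) a) (Ici 0) 0 := by
    unfold parabolicIntegrand
    exact ((continuousAt_rpow_const 0 (q + 1) (Or.inr hq₁.le)).mul
      (by fun_prop)).continuousWithinAt
  have key := integral_Ioi_of_hasDerivAt_of_tendsto hcont hderiv hint'
    (tendsto_zero_of_hasDerivAt_of_integrableOn_Ioi hderiv hint' hint₁)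
  rw [integral_sub (f := fun u => (q + 1) * parabolicIntegrand q a u
      + a * parabolicIntegrand (q + 1) a u) (hint₀.add (hint₁.const_mul a)) hint₂,
    integral_add hint₀ (hint₁.const_mul a), integral_const_mul, integral_const_mul] at key
  simp only [parabolicIntegrand, zero_rpow hq₁.ne', zero_mul, sub_zero] at key
  unfold parabolicIntegral parabolicIntegrand
  linarith

theorem hasDerivAt_parabolicIntegral_affine (hq : -1 < q) (k θ x : ℝ) :
    HasDerivAt (fun x => parabolicIntegral q (k * (x - θ)))
      (k * parabolicIntegral (q + 1) (k * (x - θ))) x := by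
  have := (hasDerivAt_parabolicIntegral hq (k * (x - θ))).comp x
    (((hasDerivAt_id x).sub_const θ).const_mul k)
  simpa [mul_comm, Function.comp_def] using this

theorem tendsto_parabolicIntegral_affine_atBot {k : ℝ} (hq : -1 < q) (hk : 0 < k) (θ : ℝ) :
    Tendsto (fun x => parabolicIntegral q (k * (x - θ))) atBot (𝓝 0) :=
  (tendsto_parabolicIntegral_atBot hq).comp <|
    (tendsto_atBot_add_const_right _ (-θ) tendsto_id).const_mul_atBot hk

end ParabolicIntegral

section RealAnalysis

theorem integral_Iic_of_hasDerivAt_of_nonpos {f g : ℝ → ℝ} {a m : ℝ}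
    (hf : ∀ x ∈ Iic a, HasDerivAt f (g x) x) (hg : ContinuousOn g (Iic a))
    (hg₀ : ∀ x ∈ Iic a, g x ≤ 0) (hlim : Tendsto f atBot (𝓝 m)) :
    ∫ x in Iic a, g x = f a - m := by
  refine integral_Iic_of_hasDerivAt_of_tendsto' hf ?_ hlim
  refine integrableOn_Iic_of_intervalIntegral_norm_tendsto (m - f a) a
    (fun i => ((hg.mono Icc_subset_Iic_self).integrableOn_Icc).mono_set Ioc_subset_Icc_self)
    tendsto_id ?_
  refine (hlim.sub_const (f a)).congr' ?_
  filter_upwards [eventually_le_atBot a] with i hi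
  have hsub : uIcc i a ⊆ Iic a := by simp [uIcc_of_le hi, Icc_subset_Iic_self]
  have habs : EqOn (fun x => ‖g x‖) (fun x => -g x) (uIcc i a) := fun x hx => by
    simp [abs_of_nonpos (hg₀ x (hsub hx))]
  rw [id, intervalIntegral.integral_congr habs, intervalIntegral.integral_neg,
    intervalIntegral.integral_eq_sub_of_hasDerivAt (fun x hx => hf x (hsub hx))
      ((hg.mono hsub).intervalIntegrable)]
  ring

theorem exists_mem_Ioo_eq_zero_iff_abs_integral_Iic_lt {φ g : ℝ → ℝ} {x₁ x₂ : ℝ}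
    (h₁₂ : x₁ < x₂) (hφ : ∀ x, HasDerivAt φ (g x) x) (hg : Continuous g)
    (hφ_bot : Tendsto φ atBot (𝓝 0)) (hneg : ∀ x < x₁, g x < 0)
    (hpos : ∀ x ∈ Ioo x₁ x₂, 0 < g x) :
    (∃ a ∈ Ioo x₁ x₂, φ a = 0) ↔ |∫ x in Iic x₁, g x| < ∫ x in x₁..x₂, g x := by
  have hφc : Continuous φ := continuous_iff_continuousAt.2 fun x => (hφ x).continuousAt
  have hg₀ : ∀ x ∈ Iic x₁, g x ≤ 0 := by
    rw [← closure_Iio]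
    exact (isClosed_le hg continuous_const).closure_subset_iff.2 fun x hx => (hneg x hx).le
  have hanti : StrictAntiOn φ (Iic x₁) :=
    strictAntiOn_of_hasDerivWithinAt_neg (convex_Iic x₁) hφc.continuousOn
      (fun x _ => (hφ x).hasDerivWithinAt) (by simpa using hneg)
  have hmono : StrictMonoOn φ (Icc x₁ x₂) :=
    strictMonoOn_of_hasDerivWithinAt_pos (convex_Icc x₁ x₂) hφc.continuousOn
      (fun x _ => (hφ x).hasDerivWithinAt) (by simpa using hpos)
  have hφ₁ : φ x₁ < 0 := by
    have hle : φ (x₁ - 1) ≤ 0 := ge_of_tendsto hφ_bot <| by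
      filter_upwards [eventually_le_atBot (x₁ - 1)] with y hy
      exact hanti.antitoneOn (hy.trans (by linarith)) (by simp) hy
    exact (hanti (by simp) self_mem_Iic (by linarith)).trans_le hle
  rw [integral_Iic_of_hasDerivAt_of_nonpos (fun x _ => hφ x) hg.continuousOn hg₀ hφ_bot, sub_zero,
    abs_of_neg hφ₁, intervalIntegral.integral_eq_sub_of_hasDerivAt (fun x _ => hφ x)
      (hg.intervalIntegrable _ _)]
  constructor
  · rintro ⟨a, ha, hφa⟩
    have := hmono (Ioo_subset_Icc_self ha) (right_mem_Icc.2 h₁₂.le) ha.2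
    linarith
  · intro h
    exact intermediate_value_Ioo h₁₂.le hφc.continuousOn ⟨hφ₁, by linarith⟩

theorem antitoneOn_Iic_of_hasDerivAt_mul_sub {W : ℝ → ℝ} {a θ : ℝ} (ha : 0 ≤ a)
    (hW : ∀ x, HasDerivAt W (a * (x - θ) * W x) x) (hpos : ∀ x, 0 < W x) :
    AntitoneOn W (Iic θ) :=
  antitoneOn_of_hasDerivWithinAt_nonpos (convex_Iic θ)
    (continuous_iff_continuousAt.2 fun x => (hW x).continuousAt).continuousOn
    (fun x _ => (hW x).hasDerivWithinAt) fun x hx =>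
      mul_nonpos_of_nonpos_of_nonneg
        (mul_nonpos_of_nonneg_of_nonpos ha (sub_nonpos.2 (interior_subset hx : x ∈ Iic θ)))
        (hpos x).le

theorem tendsto_div_atBot_of_antitoneOn_Iic {w W : ℝ → ℝ} {b : ℝ}
    (hw : Tendsto w atBot (𝓝 0)) (hW : AntitoneOn W (Iic b)) (hb : 0 < W b) :
    Tendsto (fun x => w x / W x) atBot (𝓝 0) := by
  refine squeeze_zero_norm' ?_ (by simpa using hw.norm.div_const (W b))
  filter_upwards [eventually_le_atBot b] with x hx
  have hWx : W b ≤ W x := hW hx self_mem_Iic hx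
  rw [norm_div, Real.norm_of_nonneg (hb.trans_le hWx).le]
  exact div_le_div_of_nonneg_left (norm_nonneg _) hb hWx

end RealAnalysis

section StrictConcave

variable {s : Set ℝ} {f : ℝ → ℝ} {x x₁ x₂ : ℝ}

theorem StrictConcaveOn.neg_of_lt_of_eq_zero (hf : StrictConcaveOn ℝ s f) (hx : x ∈ s)
    (hx₂ : x₂ ∈ s) (hxx₁ : x < x₁) (h₁₂ : x₁ < x₂) (h₁ : f x₁ = 0) (h₂ : f x₂ = 0) : f x < 0 := by
  have := hf.slope_anti_adjacent hx hx₂ hxx₁ h₁₂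
  rw [h₁, h₂, sub_self, zero_div, zero_sub] at this
  exact neg_pos.1 ((div_pos_iff_of_pos_right (sub_pos.2 hxx₁)).1 this)

theorem StrictConcaveOn.pos_of_mem_Ioo_of_eq_zero (hf : StrictConcaveOn ℝ s f) (hx₁ : x₁ ∈ s)
    (hx₂ : x₂ ∈ s) (hx : x ∈ Ioo x₁ x₂) (h₁ : f x₁ = 0) (h₂ : f x₂ = 0) : 0 < f x := by
  have h₁₂ := hx.1.trans hx.2
  simpa [h₁, h₂] using hf.lt_on_openSegment hx₁ hx₂ h₁₂.ne (by rwa [openSegment_eq_Ioo h₁₂])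

theorem strictConcaveOn_sub_mul_sub_mul_exp_neg (a b : ℝ) {c : ℝ} (hc : 0 < c) :
    StrictConcaveOn ℝ univ fun x => a - b * x - c * exp (-x) := by
  refine ⟨convex_univ, fun x _ y _ hxy α β hα hβ hαβ => ?_⟩
  have := strictConvexOn_exp.2 (mem_univ (-x)) (mem_univ (-y)) (neg_injective.ne hxy) hα hβ hαβ
  simp only [smul_eq_mul, mul_neg, ← neg_add] at this ⊢
  have ha : α * a + β * a = a := by rw [← add_mul, hαβ, one_mul]
  nlinarith [mul_lt_mul_of_pos_left this hc]

end StrictConcave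

section OrnsteinUhlenbeck

variable {μ σ θ r c : ℝ} {F F₁ G G₁ : ℝ → ℝ}

/-- `(σ²/2) F'' + μ (θ - x) F' = r F` with `F₁ = F'`, i.e. `F` is `r`-harmonic for the
Ornstein–Uhlenbeck process `dX = μ (θ - X) dt + σ dB`. -/
structure SolvesOUEquation (μ σ θ r : ℝ) (F F₁ : ℝ → ℝ) : Prop where
  hasDerivAt : ∀ x, HasDerivAt F (F₁ x) x
  hasDerivAt_deriv : ∀ x, HasDerivAt F₁ (2 / σ ^ 2 * (r * F x + μ * (x - θ) * F₁ x)) x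

theorem solvesOUEquation_parabolicIntegral {q k : ℝ} (hq : -1 < q) (hσ : σ ≠ 0)
    (hk : σ ^ 2 * k ^ 2 = 2 * μ) (hr : μ * (q + 1) = r) (θ : ℝ) :
    SolvesOUEquation μ σ θ r (fun x => parabolicIntegral q (k * (x - θ)))
      (fun x => k * parabolicIntegral (q + 1) (k * (x - θ))) where
  hasDerivAt := hasDerivAt_parabolicIntegral_affine hq k θ
  hasDerivAt_deriv x := by
    refine ((hasDerivAt_parabolicIntegral_affine (q := q + 1) (by linarith) k θ x).const_mul
      k).congr_deriv ?_
    rw [show q + 1 + 1 = q + 2 by ring, parabolicIntegral_add_two hq, ← hr]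
    field_simp
    linear_combination ((q + 1) * parabolicIntegral q (k * (x - θ))
      + (x - θ) * k * parabolicIntegral (q + 1) (k * (x - θ))) * hk

noncomputable def smoothFitGap (c : ℝ) (F F₁ : ℝ → ℝ) (x : ℝ) : ℝ :=
  exp x * F x - (exp x + c) * F₁ x

theorem tendsto_smoothFitGap_atBot (c : ℝ) (hF : Tendsto F atBot (𝓝 0))
    (hF₁ : Tendsto F₁ atBot (𝓝 0)) : Tendsto (smoothFitGap c F F₁) atBot (𝓝 0) := by
  have := (tendsto_exp_atBot.mul hF).sub ((tendsto_exp_atBot.add_const c).mul hF₁)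
  rwa [zero_mul, mul_zero, sub_zero] at this

namespace SolvesOUEquation

theorem continuous (hF : SolvesOUEquation μ σ θ r F F₁) : Continuous F :=
  continuous_iff_continuousAt.2 fun x => (hF.hasDerivAt x).continuousAt

theorem hasDerivAt_wronskian (hF : SolvesOUEquation μ σ θ r F F₁)
    (hG : SolvesOUEquation μ σ θ r G G₁) (hσ : σ ≠ 0) (x : ℝ) :
    HasDerivAt (fun x => F₁ x * G x - F x * G₁ x)
      (2 * μ / σ ^ 2 * (x - θ) * (F₁ x * G x - F x * G₁ x)) x :=
  (((hF.hasDerivAt_deriv x).mul (hG.hasDerivAt x)).sub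
    ((hF.hasDerivAt x).mul (hG.hasDerivAt_deriv x))).congr_deriv (by field_simp; ring)

theorem hasDerivAt_smoothFitGap_div {W : ℝ → ℝ} {x : ℝ} (hF : SolvesOUEquation μ σ θ r F F₁)
    (hσ : σ ≠ 0) (hW : HasDerivAt W (2 * μ / σ ^ 2 * (x - θ) * W x) x) (hW₀ : W x ≠ 0) (c : ℝ) :
    HasDerivAt (fun x => smoothFitGap c F F₁ x / W x)
      (2 * F x / (σ ^ 2 * W x) * exp x * ((μ * θ + σ ^ 2 / 2 - r) - μ * x - r * c * exp (-x)))
      x := by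
  have hgap : HasDerivAt (smoothFitGap c F F₁)
      (exp x * F x - (exp x + c) * (2 / σ ^ 2 * (r * F x + μ * (x - θ) * F₁ x))) x :=
    (((hasDerivAt_exp x).mul (hF.hasDerivAt x)).sub
      (((hasDerivAt_exp x).add_const c).mul (hF.hasDerivAt_deriv x))).congr_deriv (by ring)
  refine (hgap.div hW hW₀).congr_deriv ?_
  rw [smoothFitGap, exp_neg]
  field_simp
  ring

theorem exists_smoothFitGap_eq_zero_iff {x₁ x₂ : ℝ} {W Ψ f : ℝ → ℝ}
    (hF : SolvesOUEquation μ σ θ r F F₁) (hG : SolvesOUEquation μ σ θ r G G₁) (hσ : σ ≠ 0)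
    (hμ : 0 ≤ μ) (hrc : 0 < r * c) (hF_pos : ∀ x, 0 < F x) (hF_bot : Tendsto F atBot (𝓝 0))
    (hF₁_bot : Tendsto F₁ atBot (𝓝 0))
    (hf : ∀ x, f x = (μ * θ + σ ^ 2 / 2 - r) - μ * x - r * c * exp (-x))
    (hW : ∀ x, W x = F₁ x * G x - F x * G₁ x) (hW_pos : ∀ x, 0 < W x)
    (hΨ : ∀ x, Ψ x = 2 * F x / (σ ^ 2 * W x)) (h₁₂ : x₁ < x₂) (h₁ : f x₁ = 0) (h₂ : f x₂ = 0) :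
    (∃ a ∈ Ioo x₁ x₂, smoothFitGap c F F₁ a = 0) ↔
      |∫ x in Iic x₁, Ψ x * exp x * f x| < ∫ x in x₁..x₂, Ψ x * exp x * f x := by
  have hWd : ∀ x, HasDerivAt W (2 * μ / σ ^ 2 * (x - θ) * W x) x :=
    (funext hW : W = _) ▸ hF.hasDerivAt_wronskian hG hσ
  have hφ : ∀ x, HasDerivAt (fun x => smoothFitGap c F F₁ x / W x) (Ψ x * exp x * f x) x :=
    fun x => by
      rw [hΨ, hf]
      exact hF.hasDerivAt_smoothFitGap_div hσ (hWd x) (hW_pos x).ne' c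
  have hφ_bot := tendsto_div_atBot_of_antitoneOn_Iic (tendsto_smoothFitGap_atBot c hF_bot hF₁_bot)
    (antitoneOn_Iic_of_hasDerivAt_mul_sub (by positivity) hWd hW_pos) (hW_pos θ)
  have hΨ_pos : ∀ x, 0 < Ψ x * exp x := fun x => by
    have := hF_pos x
    have := hW_pos x
    rw [hΨ]
    positivity
  have hg : Continuous fun x => Ψ x * exp x * f x := by
    have hFc := hF.continuous
    have hWc : Continuous W := continuous_iff_continuousAt.2 fun x => (hWd x).continuousAt
    simp only [hΨ, hf]
    exact ((Continuous.div (by fun_prop) (by fun_prop)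
      fun x => (mul_pos (by positivity) (hW_pos x)).ne').mul (by fun_prop)).mul (by fun_prop)
  have hconc : StrictConcaveOn ℝ univ f :=
    (funext hf : f = _) ▸ strictConcaveOn_sub_mul_sub_mul_exp_neg _ μ hrc
  rw [← exists_mem_Ioo_eq_zero_iff_abs_integral_Iic_lt h₁₂ hφ hg hφ_bot
    (fun x hx => mul_neg_of_pos_of_neg (hΨ_pos x)
      (hconc.neg_of_lt_of_eq_zero trivial trivial hx h₁₂ h₁ h₂))
    (fun x hx => mul_pos (hΨ_pos x) (hconc.pos_of_mem_Ioo_of_eq_zero trivial trivial hx h₁ h₂))]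
  simp only [div_eq_zero_iff, (hW_pos _).ne', or_false]

end SolvesOUEquation

end OrnsteinUhlenbeck

theorem stmt16_general
    (μ σ θ r c_b : ℝ)
    (hμ : 0 < μ) (hσ : 0 < σ) (hr : 0 < r) (hcb : 0 < c_b)
    (F G : ℝ → ℝ)
    (hF : ∀ x : ℝ, F x = ∫ u in Ioi (0:ℝ),
        u ^ (r / μ - 1) * Real.exp (Real.sqrt (2 * μ / σ ^ 2) * (x - θ) * u - u ^ 2 / 2))
    (hG : ∀ x : ℝ, G x = ∫ u in Ioi (0:ℝ),
        u ^ (r / μ - 1) * Real.exp (Real.sqrt (2 * μ / σ ^ 2) * (θ - x) * u - u ^ 2 / 2))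
    (f_b : ℝ → ℝ)
    (hfb : ∀ x : ℝ, f_b x = (μ * θ + σ ^ 2 / 2 - r) - μ * x - r * c_b * Real.exp (-x))
    (W Ψ : ℝ → ℝ)
    (hW : ∀ x, W x = deriv F x * G x - F x * deriv G x)
    (hWpos : ∀ x, 0 < W x)
    (hΨ : ∀ x, Ψ x = 2 * F x / (σ ^ 2 * W x))
    (xb1 xb2 : ℝ) (hlt : xb1 < xb2) (hroot1 : f_b xb1 = 0) (hroot2 : f_b xb2 = 0) :
    (∃ a ∈ Ioo xb1 xb2, F a * Real.exp a = deriv F a * (Real.exp a + c_b)) ↔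
      |∫ x in Iic xb1, Ψ x * Real.exp x * f_b x| <
        ∫ x in xb1..xb2, Ψ x * Real.exp x * f_b x := by
  set k := √(2 * μ / σ ^ 2)
  set p := r / μ - 1 with hp_def
  have hk : 0 < k := sqrt_pos.2 (by positivity)
  have hp : -1 < p := by linarith [div_pos hr hμ]
  have hσk : σ ^ 2 * k ^ 2 = 2 * μ := by rw [sq_sqrt (by positivity)]; field_simp
  have hμp : μ * (p + 1) = r := by rw [hp_def]; field_simp; ring
  have hF' : F = fun x => parabolicIntegral p (k * (x - θ)) := funext hF
  have hG' : G = fun x => parabolicIntegral p (-k * (x - θ)) := funext fun x =>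
    (hG x : G x = parabolicIntegral p (k * (θ - x))).trans
      (congrArg (parabolicIntegral p) (by ring))
  have hFsol := hF' ▸ solvesOUEquation_parabolicIntegral hp hσ.ne' hσk hμp θ
  have hGsol := hG' ▸ solvesOUEquation_parabolicIntegral hp hσ.ne' (by rwa [neg_sq]) hμp θ
  have hF₁_bot : Tendsto (fun x => k * parabolicIntegral (p + 1) (k * (x - θ))) atBot (𝓝 0) := by
    simpa using (tendsto_parabolicIntegral_affine_atBot (q := p + 1) (by linarith) hk θ).const_mul k
  rw [← hFsol.exists_smoothFitGap_eq_zero_iff hGsol hσ.ne' hμ.le (mul_pos hr hcb)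
    (fun x => hF' ▸ parabolicIntegral_pos hp _)
    (hF' ▸ tendsto_parabolicIntegral_affine_atBot hp hk θ)
    hF₁_bot hfb (fun x => by rw [hW, (hFsol.hasDerivAt x).deriv, (hGsol.hasDerivAt x).deriv])
    hWpos hΨ hlt hroot1 hroot2]
  refine exists_congr fun a => and_congr_right fun _ => ?_
  rw [smoothFitGap, sub_eq_zero, (hFsol.hasDerivAt a).deriv, mul_comm (exp a),
    mul_comm (exp a + c_b)]

/-- If f_b has two distinct roots x_{b1} < x_{b2}, then there exists
ã* ∈ (x_{b1}, x_{b2}) with F(ã*)e^{ã*} = F'(ã*)(e^{ã*} + c_b) iff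
|∫_{−∞}^{x_{b1}} Ψ e^x f_b dx| < ∫_{x_{b1}}^{x_{b2}} Ψ e^x f_b dx. -/
theorem stmt16
    (μ σ θ r c_s c_b : ℝ)
    (hμ : 0 < μ) (hσ : 0 < σ) (hr : 0 < r) (hcs : 0 < c_s) (hcb : 0 < c_b)
    (F G : ℝ → ℝ)
    (hF : ∀ x : ℝ, F x = ∫ u in Ioi (0:ℝ),
        u ^ (r / μ - 1) * Real.exp (Real.sqrt (2 * μ / σ ^ 2) * (x - θ) * u - u ^ 2 / 2))
    (hG : ∀ x : ℝ, G x = ∫ u in Ioi (0:ℝ),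
        u ^ (r / μ - 1) * Real.exp (Real.sqrt (2 * μ / σ ^ 2) * (θ - x) * u - u ^ 2 / 2))
    (f_b : ℝ → ℝ)
    (hfb : ∀ x : ℝ, f_b x = (μ * θ + σ ^ 2 / 2 - r) - μ * x - r * c_b * Real.exp (-x))
    (W Ψ : ℝ → ℝ)
    (hW : ∀ x, W x = deriv F x * G x - F x * deriv G x)
    (hWpos : ∀ x, 0 < W x)
    (hΨ : ∀ x, Ψ x = 2 * F x / (σ ^ 2 * W x))
    (xb1 xb2 : ℝ) (hlt : xb1 < xb2) (hroot1 : f_b xb1 = 0) (hroot2 : f_b xb2 = 0) :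
    (∃ a ∈ Ioo xb1 xb2, F a * Real.exp a = deriv F a * (Real.exp a + c_b)) ↔
      |∫ x in Iic xb1, Ψ x * Real.exp x * f_b x| <
        ∫ x in xb1..xb2, Ψ x * Real.exp x * f_b x :=
  stmt16_general μ σ θ r c_b hμ hσ hr hcb F G hF hG f_b hfb W Ψ hW hWpos hΨ xb1 xb2 hlt hroot1
    hroot2
end

section
/- Assume either (a) f_b has at most one root, or (b) f_b has two distinct roots x_{b1} < x_{b2}, there exists ã* ∈ (x_{b1}, x_{b2}) with F(ã*)·e^{ã*} = F'(ã*)·(e^{ã*} + c_b), and (e^{ã*} + c_b)/F(ã*) ≥ (e^{b*} − c_s)/F(b*). Then for all x < b*, (e^x + c_b)/F(x) ≥ (e^{b*} − c_s)/F(b*). Moreover, in case (a) the function x ↦ (e^x + c_b)/F(x) is strictly decreasing on ℝ. -/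
/-!
Write `F(x) = J_p(γ(x - θ))` with `J_p(y) = ∫₀^∞ u^p e^{yu - u²/2} du`, `p = r/μ - 1` and
`γ² = 2μ/σ²`. Integration by parts gives `J_{p+2} = (p + 1) J_p + y J_{p+1}`, which is the
Ornstein–Uhlenbeck equation `σ²/2 F'' - μ(x - θ) F' - r F = 0`; moreover `F > 0`.

The derivative of `A(x) = (e^x + c_b)/F(x)` has the sign of `W = F e^x - F' (e^x + c_b)`. Abel's
integrating factor `m(x) = exp(-μ(x - θ)²/σ²)` turns the equation into
`(m W)' = (2/σ²) m F e^x f_b`, and `m W → 0` at `-∞`. In case (a) `f_b ≤ 0`, since it tends to `-∞`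
at both ends, so `m W < 0` and `A` is strictly decreasing. In case (b) `f_b` is concave, so `m W`
decreases, then increases on `[x_{b1}, x_{b2}]` through its zero at `ã*`, then decreases again:
`A` decreases up to `ã*` and is unimodal on `[ã*, ∞)`, whence `A ≥ min (A ã*) (A b*)` on `(-∞, b*]`.
Both cases end with `(e^{b*} - c_s)/F(b*) ≤ A(b*)`.
-/

open Real MeasureTheory Set Filter Topology

noncomputable def gaussMomentIntegral (p y : ℝ) : ℝ :=
  ∫ u in Ioi (0 : ℝ), u ^ p * exp (y * u - u ^ 2 / 2)

section GaussMomentIntegral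

variable {p : ℝ}

lemma measurable_gaussMoment_integrand (p y : ℝ) :
    Measurable fun u : ℝ => u ^ p * exp (y * u - u ^ 2 / 2) := by
  fun_prop

lemma gaussMoment_integrand_le (p y : ℝ) {u : ℝ} (hu : 0 ≤ u) :
    u ^ p * exp (y * u - u ^ 2 / 2) ≤ exp (y ^ 2) * (u ^ p * exp (-(1 / 4) * u ^ 2)) := by
  rw [mul_left_comm, ← exp_add]
  gcongr
  nlinarith [sq_nonneg (y - u / 2)]

lemma integrableOn_gaussMoment_integrand (hp : -1 < p) (y : ℝ) :
    IntegrableOn (fun u : ℝ => u ^ p * exp (y * u - u ^ 2 / 2)) (Ioi 0) := by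
  refine ((integrableOn_rpow_mul_exp_neg_mul_sq (by norm_num : (0 : ℝ) < 1 / 4) hp).const_mul
    (exp (y ^ 2))).mono' (measurable_gaussMoment_integrand p y).aestronglyMeasurable ?_
  filter_upwards [ae_restrict_mem measurableSet_Ioi] with u (hu : 0 < u)
  rw [norm_of_nonneg (mul_nonneg (rpow_nonneg hu.le p) (exp_pos _).le)]
  exact gaussMoment_integrand_le p y hu.le

lemma gaussMomentIntegral_pos (hp : -1 < p) (y : ℝ) : 0 < gaussMomentIntegral p y := by
  have hpos : ∀ u ∈ Ioi (0 : ℝ), 0 < u ^ p * exp (y * u - u ^ 2 / 2) :=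
    fun u hu => mul_pos (rpow_pos_of_pos hu p) (exp_pos _)
  rw [gaussMomentIntegral, setIntegral_pos_iff_support_of_nonneg_ae
    ((ae_restrict_mem measurableSet_Ioi).mono fun u hu => (hpos u hu).le)
    (integrableOn_gaussMoment_integrand hp y)]
  exact lt_of_lt_of_le (by simp) (measure_mono fun u hu => ⟨(hpos u hu).ne', hu⟩)

lemma gaussMomentIntegral_mono (hp : -1 < p) : Monotone (gaussMomentIntegral p) := by
  intro y₁ y₂ hy
  refine setIntegral_mono_on (integrableOn_gaussMoment_integrand hp y₁)
    (integrableOn_gaussMoment_integrand hp y₂) measurableSet_Ioi fun u (hu : 0 < u) => ?_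
  gcongr

lemma hasDerivAt_gaussMoment_integrand (p : ℝ) {u : ℝ} (hu : 0 < u) (y : ℝ) :
    HasDerivAt (fun y => u ^ p * exp (y * u - u ^ 2 / 2))
      (u ^ (p + 1) * exp (y * u - u ^ 2 / 2)) y := by
  have h : HasDerivAt (fun y => y * u - u ^ 2 / 2) u y := by
    simpa using ((hasDerivAt_id y).mul_const u).sub_const (u ^ 2 / 2)
  exact (h.exp.const_mul (u ^ p)).congr_deriv (by rw [rpow_add_one hu.ne']; ring)

lemma hasDerivAt_gaussMomentIntegral (hp : -1 < p) (y₀ : ℝ) :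
    HasDerivAt (gaussMomentIntegral p) (gaussMomentIntegral (p + 1) y₀) y₀ := by
  refine (hasDerivAt_integral_of_dominated_loc_of_deriv_le
    (F' := fun y u => u ^ (p + 1) * exp (y * u - u ^ 2 / 2)) (Iio_mem_nhds (lt_add_one y₀))
    (.of_forall fun y => (measurable_gaussMoment_integrand p y).aestronglyMeasurable)
    (integrableOn_gaussMoment_integrand hp y₀)
    (measurable_gaussMoment_integrand (p + 1) y₀).aestronglyMeasurable ?_
    (integrableOn_gaussMoment_integrand (p := p + 1) (by linarith) (y₀ + 1)) ?_).2
  · filter_upwards [ae_restrict_mem measurableSet_Ioi] with u (hu : 0 < u) y (hy : y < y₀ + 1)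
    rw [norm_of_nonneg (mul_nonneg (rpow_nonneg hu.le _) (exp_pos _).le)]
    gcongr
  · filter_upwards [ae_restrict_mem measurableSet_Ioi] with u (hu : 0 < u) y _
    exact hasDerivAt_gaussMoment_integrand p hu y

lemma tendsto_gaussMoment_integrand_atTop (p y : ℝ) :
    Tendsto (fun u : ℝ => u ^ p * exp (y * u - u ^ 2 / 2)) atTop (𝓝 0) := by
  have hdecay : Tendsto (fun u : ℝ => exp (y ^ 2) * (u ^ p * exp (-(1 / 4) * u ^ 2))) atTop
      (𝓝 0) := by
    simpa using ((rpow_mul_exp_neg_mul_sq_isLittleO_exp_neg (by norm_num : (0 : ℝ) < 1 / 4)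
      p).trans_tendsto (tendsto_exp_atBot.comp (tendsto_id.const_mul_atTop_of_neg
        (by norm_num)))).const_mul (exp (y ^ 2))
  refine tendsto_of_tendsto_of_tendsto_of_le_of_le' tendsto_const_nhds hdecay ?_ ?_
  · filter_upwards [eventually_ge_atTop 0] with u hu
    exact mul_nonneg (rpow_nonneg hu p) (exp_pos _).le
  · filter_upwards [eventually_ge_atTop 0] with u hu
    exact gaussMoment_integrand_le p y hu

lemma gaussMomentIntegral_add_two (hp : -1 < p) (y : ℝ) :
    gaussMomentIntegral (p + 2) y =
      (p + 1) * gaussMomentIntegral p y + y * gaussMomentIntegral (p + 1) y := by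
  have hp₁ : 0 < p + 1 := by linarith
  have hderiv : ∀ u ∈ Ioi (0 : ℝ), HasDerivAt (fun u : ℝ => u ^ (p + 1) * exp (y * u - u ^ 2 / 2))
      ((p + 1) * (u ^ p * exp (y * u - u ^ 2 / 2)) + y * (u ^ (p + 1) * exp (y * u - u ^ 2 / 2))
        - u ^ (p + 2) * exp (y * u - u ^ 2 / 2)) u := by
    intro u (hu : 0 < u)
    have h : HasDerivAt (fun u : ℝ => y * u - u ^ 2 / 2) (y - u) u :=
      (((hasDerivAt_id u).const_mul y).sub ((hasDerivAt_pow 2 u).div_const 2)).congr_deriv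
        (by norm_num)
    refine ((hasDerivAt_rpow_const (p := p + 1) (Or.inl hu.ne')).mul h.exp).congr_deriv ?_
    have e₁ : u ^ (p + 1) = u ^ p * u := rpow_add_one hu.ne' p
    have e₂ : u ^ (p + 2) = u ^ p * u * u := by
      rw [show p + 2 = p + 1 + 1 by ring, rpow_add_one hu.ne', e₁]
    rw [add_sub_cancel_right, e₂, e₁]
    ring
  have hcont : ContinuousWithinAt (fun u : ℝ => u ^ (p + 1) * exp (y * u - u ^ 2 / 2)) (Ici 0) 0 :=
    ((continuousAt_rpow_const 0 _ (Or.inr hp₁.le)).mul (by fun_prop)).continuousWithinAt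
  have hint := integrableOn_gaussMoment_integrand hp y
  have hint₁ := integrableOn_gaussMoment_integrand (by linarith : -1 < p + 1) y
  have hint₂ := integrableOn_gaussMoment_integrand (by linarith : -1 < p + 2) y
  have hsum := (hint.const_mul (p + 1)).add (hint₁.const_mul y)
  have key := integral_Ioi_of_hasDerivAt_of_tendsto hcont hderiv (hsum.sub hint₂)
    (tendsto_gaussMoment_integrand_atTop (p + 1) y)
  rw [integral_sub, integral_add, integral_const_mul, integral_const_mul, zero_rpow hp₁.ne',
    zero_mul, sub_zero] at key
  · unfold gaussMomentIntegral
    linarith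
  exacts [hint.const_mul _, hint₁.const_mul _, hsum, hint₂]

lemma hasDerivAt_gaussMomentIntegral_comp (hp : -1 < p) (γ θ x : ℝ) :
    HasDerivAt (fun x => gaussMomentIntegral p (γ * (x - θ)))
      (γ * gaussMomentIntegral (p + 1) (γ * (x - θ))) x := by
  have h : HasDerivAt (fun x => γ * (x - θ)) γ x := by
    simpa using ((hasDerivAt_id x).sub_const θ).const_mul γ
  exact ((hasDerivAt_gaussMomentIntegral hp _).comp x h).congr_deriv (mul_comm _ _)

end GaussMomentIntegral

lemma monotoneOn_of_hasDerivAt_nonneg {f f' : ℝ → ℝ} {D : Set ℝ} (hD : Convex ℝ D)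
    (hf : ∀ x, HasDerivAt f (f' x) x) (hf' : ∀ x ∈ interior D, 0 ≤ f' x) : MonotoneOn f D :=
  monotoneOn_of_hasDerivWithinAt_nonneg hD (fun x _ => (hf x).continuousAt.continuousWithinAt)
    (fun x _ => (hf x).hasDerivWithinAt) hf'

lemma antitoneOn_of_hasDerivAt_nonpos {f f' : ℝ → ℝ} {D : Set ℝ} (hD : Convex ℝ D)
    (hf : ∀ x, HasDerivAt f (f' x) x) (hf' : ∀ x ∈ interior D, f' x ≤ 0) : AntitoneOn f D :=
  antitoneOn_of_hasDerivWithinAt_nonpos hD (fun x _ => (hf x).continuousAt.continuousWithinAt)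
    (fun x _ => (hf x).hasDerivWithinAt) hf'

lemma strictAnti_of_hasDerivAt_nonpos_of_unique_zero {f f' : ℝ → ℝ}
    (hf : ∀ x, HasDerivAt f (f' x) x) (hf' : f' ≤ 0)
    (hzero : ∀ x y, f' x = 0 → f' y = 0 → x = y) : StrictAnti f := by
  have hanti := antitone_of_hasDerivAt_nonpos hf hf'
  intro x y hxy
  refine (hanti hxy.le).lt_of_ne fun hfxy => ?_
  have hflat : ∀ t ∈ Ioo x y, f' t = 0 := by
    intro t ht
    have hconst : f =ᶠ[𝓝 t] fun _ => f x := by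
      filter_upwards [Ioo_mem_nhds ht.1 ht.2] with s hs
      exact le_antisymm (hanti hs.1.le) (hfxy ▸ hanti hs.2.le)
    exact (hf t).unique ((hasDerivAt_const t (f x)).congr_of_eventuallyEq hconst)
  have := hzero _ _ (hflat ((2 * x + y) / 3) ⟨by linarith, by linarith⟩)
    (hflat ((x + 2 * y) / 3) ⟨by linarith, by linarith⟩)
  linarith

lemma nonpos_of_antitoneOn_Iic_of_tendsto_atBot {f : ℝ → ℝ} {c x : ℝ} (hf : AntitoneOn f (Iic c))
    (hlim : Tendsto f atBot (𝓝 0)) (hx : x ≤ c) : f x ≤ 0 :=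
  ge_of_tendsto hlim (by
    filter_upwards [eventually_le_atBot x] with t ht
    exact hf (ht.trans hx) hx ht)

lemma nonpos_of_eventually_neg_of_unique_zero {f : ℝ → ℝ} (hf : Continuous f)
    (hbot : ∀ᶠ x in atBot, f x < 0) (htop : ∀ᶠ x in atTop, f x < 0)
    (hzero : ∀ x y, f x = 0 → f y = 0 → x = y) (x : ℝ) : f x ≤ 0 := by
  by_contra! hx
  obtain ⟨a, hax, ha⟩ := ((eventually_lt_atBot x).and hbot).exists
  obtain ⟨b, hxb, hb⟩ := ((eventually_gt_atTop x).and htop).exists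
  obtain ⟨s, hs, hs0⟩ := intermediate_value_Ioo hax.le hf.continuousOn ⟨ha, hx⟩
  obtain ⟨t, ht, ht0⟩ := intermediate_value_Ioo' hxb.le hf.continuousOn ⟨hb, hx⟩
  linarith [hzero s t hs0 ht0, hs.2, ht.1]

lemma ConcaveOn.sign_of_zeros {f : ℝ → ℝ} (hf : ConcaveOn ℝ univ f) {x₁ x₂ : ℝ} (h12 : x₁ < x₂)
    (h₁ : f x₁ = 0) (h₂ : f x₂ = 0) :
    (∀ t ≤ x₁, f t ≤ 0) ∧ (∀ t ∈ Icc x₁ x₂, 0 ≤ f t) ∧ (∀ t, x₂ ≤ t → f t ≤ 0) :=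
  ⟨fun _ ht => h₁ ▸ hf.left_le_of_le_right'' trivial trivial ht h12 (h₁.trans h₂.symm).le,
    fun _ ht => by simpa [h₁, h₂] using hf.min_le_of_mem_Icc trivial trivial ht,
    fun _ ht => h₂ ▸ hf.right_le_of_le_left'' trivial trivial h12 ht (h₂.trans h₁.symm).le⟩

section QuotientComparison

variable {A M g k f : ℝ → ℝ}

lemma min_le_of_hasDerivAt_div {a b : ℝ} (hA : ∀ x, HasDerivAt A (M x / g x) x)
    (hg : ∀ x, 0 < g x) (hle : ∀ x ≤ a, M x ≤ 0)
    (hneg : ∀ s, a < s → M s < 0 → ∀ t, s ≤ t → M t ≤ 0) (x : ℝ) (hxb : x ≤ b) :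
    min (A a) (A b) ≤ A x := by
  have hmono : ∀ {D : Set ℝ}, Convex ℝ D → (∀ t ∈ interior D, 0 ≤ M t) → MonotoneOn A D :=
    fun hD hM => monotoneOn_of_hasDerivAt_nonneg hD hA fun t ht => div_nonneg (hM t ht) (hg t).le
  have hanti : ∀ {D : Set ℝ}, Convex ℝ D → (∀ t ∈ interior D, M t ≤ 0) → AntitoneOn A D :=
    fun hD hM => antitoneOn_of_hasDerivAt_nonpos hD hA fun t ht =>
      div_nonpos_of_nonpos_of_nonneg (hM t ht) (hg t).le
  rcases le_or_gt x a with hxa | hax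
  · exact min_le_of_left_le (hanti (convex_Iic a)
      (fun t ht => hle t (interior_subset (s := Iic a) ht)) hxa (le_refl a) hxa)
  by_cases hsign : ∀ s ∈ Ioo a x, 0 ≤ M s
  · refine min_le_of_left_le (hmono (convex_Icc a x) (fun t ht => hsign t ?_)
      (left_mem_Icc.2 hax.le) (right_mem_Icc.2 hax.le) hax.le)
    rwa [interior_Icc] at ht
  push Not at hsign
  obtain ⟨s, hs, hMs⟩ := hsign
  refine min_le_of_right_le (hanti (convex_Icc x b) (fun t ht => hneg s hs.1 hMs t ?_)
    (left_mem_Icc.2 hxb) (right_mem_Icc.2 hxb) hxb)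
  rw [interior_Icc] at ht
  exact hs.2.le.trans ht.1.le

lemma strictAnti_of_nonpos_of_unique_zero (hA : ∀ x, HasDerivAt A (M x / g x) x)
    (hg : ∀ x, 0 < g x) (hM : ∀ x, HasDerivAt M (k x * f x) x) (hk : ∀ x, 0 < k x)
    (hlim : Tendsto M atBot (𝓝 0)) (hf : ∀ x, f x ≤ 0)
    (hzero : ∀ x y, f x = 0 → f y = 0 → x = y) : StrictAnti A := by
  have hManti : StrictAnti M :=
    strictAnti_of_hasDerivAt_nonpos_of_unique_zero hM
      (fun x => mul_nonpos_of_nonneg_of_nonpos (hk x).le (hf x)) fun x y hx hy =>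
        hzero x y ((mul_eq_zero.1 hx).resolve_left (hk x).ne')
          ((mul_eq_zero.1 hy).resolve_left (hk y).ne')
  have hMneg : ∀ x, M x < 0 := fun x => (hManti (sub_one_lt x)).trans_le
    (nonpos_of_antitoneOn_Iic_of_tendsto_atBot (hManti.antitone.antitoneOn _) hlim le_rfl)
  exact strictAnti_of_hasDerivAt_neg hA fun x => div_neg_of_neg_of_pos (hMneg x) (hg x)

lemma min_le_of_concaveOn {x₁ x₂ a : ℝ} (hA : ∀ x, HasDerivAt A (M x / g x) x)
    (hg : ∀ x, 0 < g x) (hM : ∀ x, HasDerivAt M (k x * f x) x) (hk : ∀ x, 0 < k x)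
    (hlim : Tendsto M atBot (𝓝 0)) (hf : ConcaveOn ℝ univ f) (h12 : x₁ < x₂)
    (h₁ : f x₁ = 0) (h₂ : f x₂ = 0) (ha : a ∈ Icc x₁ x₂) (hMa : M a = 0) (b x : ℝ)
    (hxb : x ≤ b) : min (A a) (A b) ≤ A x := by
  obtain ⟨hleft, hmid, hright⟩ := hf.sign_of_zeros h12 h₁ h₂
  have hmono : MonotoneOn M (Icc x₁ x₂) := monotoneOn_of_hasDerivAt_nonneg (convex_Icc _ _) hM
    fun t ht => mul_nonneg (hk t).le (hmid t (interior_subset ht))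
  have hanti₁ : AntitoneOn M (Iic x₁) := antitoneOn_of_hasDerivAt_nonpos (convex_Iic _) hM
    fun t ht => mul_nonpos_of_nonneg_of_nonpos (hk t).le
      (hleft t (interior_subset (s := Iic x₁) ht))
  have hanti₂ : AntitoneOn M (Ici x₂) := antitoneOn_of_hasDerivAt_nonpos (convex_Ici _) hM
    fun t ht => mul_nonpos_of_nonneg_of_nonpos (hk t).le
      (hright t (interior_subset (s := Ici x₂) ht))
  refine min_le_of_hasDerivAt_div hA hg (fun y hy => ?_) (fun s has hs t hst => ?_) x hxb
  · rcases le_total y x₁ with h | h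
    · exact nonpos_of_antitoneOn_Iic_of_tendsto_atBot hanti₁ hlim h
    · exact hMa ▸ hmono ⟨h, hy.trans ha.2⟩ ha hy
  · have hx₂s : x₂ < s := by
      by_contra! h
      exact hs.not_ge (hMa ▸ hmono ha ⟨ha.1.trans has.le, h⟩ has.le)
    exact (hanti₂ hx₂s.le (hx₂s.le.trans hst) hst).trans hs.le

end QuotientComparison

noncomputable def abelWronskian (F F' : ℝ → ℝ) (β θ c x : ℝ) : ℝ :=
  exp (-(β / 2) * (x - θ) ^ 2) * (F x * exp x - F' x * (exp x + c))

lemma hasDerivAt_abelWronskian {F F₁ F₂ : ℝ → ℝ} {α β θ : ℝ} (c : ℝ)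
    (hF : ∀ x, HasDerivAt F (F₁ x) x) (hF₁ : ∀ x, HasDerivAt F₁ (F₂ x) x)
    (hode : ∀ x, F₂ x = α * F x + β * (x - θ) * F₁ x) (x : ℝ) :
    HasDerivAt (abelWronskian F F₁ β θ c) (exp (-(β / 2) * (x - θ) ^ 2) * F x * exp x *
      (1 - α - β * (x - θ) - α * c * exp (-x))) x := by
  have hweight : HasDerivAt (fun x => exp (-(β / 2) * (x - θ) ^ 2))
      (exp (-(β / 2) * (x - θ) ^ 2) * (-(β / 2) * (2 * (x - θ)))) x := by
    simpa using ((((hasDerivAt_id x).sub_const θ).pow 2).const_mul (-(β / 2))).exp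
  have hW := ((hF x).mul (hasDerivAt_exp x)).sub ((hF₁ x).mul ((hasDerivAt_exp x).add_const c))
  refine (hweight.mul hW).congr_deriv ?_
  simp only [Pi.mul_apply, Pi.sub_apply]
  rw [hode, exp_neg]
  field_simp
  ring

lemma hasDerivAt_abelWronskian_gaussMoment {p : ℝ} (hp : -1 < p) (γ θ c x : ℝ) :
    HasDerivAt (abelWronskian (fun x => gaussMomentIntegral p (γ * (x - θ)))
      (fun x => γ * gaussMomentIntegral (p + 1) (γ * (x - θ))) (γ ^ 2) θ c)
      (exp (-(γ ^ 2 / 2) * (x - θ) ^ 2) * gaussMomentIntegral p (γ * (x - θ)) * exp x *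
        (1 - γ ^ 2 * (p + 1) - γ ^ 2 * (x - θ) - γ ^ 2 * (p + 1) * c * exp (-x))) x :=
  hasDerivAt_abelWronskian c (hasDerivAt_gaussMomentIntegral_comp hp γ θ)
    (fun x => (hasDerivAt_gaussMomentIntegral_comp (by linarith) γ θ x).const_mul γ)
    (fun x => by rw [add_assoc, one_add_one_eq_two, gaussMomentIntegral_add_two hp]; ring) x

lemma hasDerivAt_exp_add_div_gaussMoment {p : ℝ} (hp : -1 < p) (γ θ c x : ℝ) :
    HasDerivAt (fun x => (exp x + c) / gaussMomentIntegral p (γ * (x - θ)))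
      (abelWronskian (fun x => gaussMomentIntegral p (γ * (x - θ)))
        (fun x => γ * gaussMomentIntegral (p + 1) (γ * (x - θ))) (γ ^ 2) θ c x /
        (exp (-(γ ^ 2 / 2) * (x - θ) ^ 2) * gaussMomentIntegral p (γ * (x - θ)) ^ 2)) x :=
  (((hasDerivAt_exp x).add_const c).div (hasDerivAt_gaussMomentIntegral_comp hp γ θ x)
    (gaussMomentIntegral_pos hp _).ne').congr_deriv (by rw [abelWronskian]; field_simp)

lemma tendsto_abelWronskian_gaussMoment_atBot {p γ : ℝ} (hp : -1 < p) (hγ : 0 < γ) (θ : ℝ)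
    {c : ℝ} (hc : 0 ≤ c) :
    Tendsto (abelWronskian (fun x => gaussMomentIntegral p (γ * (x - θ)))
      (fun x => γ * gaussMomentIntegral (p + 1) (γ * (x - θ))) (γ ^ 2) θ c) atBot (𝓝 0) := by
  have hsq : Tendsto (fun x : ℝ => (x - θ) ^ 2) atBot atTop := by
    refine ((tendsto_pow_atTop two_ne_zero).comp
      (tendsto_atTop_add_const_left atBot θ tendsto_neg_atBot_atTop)).congr fun x => ?_
    simp only [Function.comp_apply]
    ring
  have hweight : Tendsto (fun x : ℝ => exp (-(γ ^ 2 / 2) * (x - θ) ^ 2)) atBot (𝓝 0) :=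
    tendsto_exp_atBot.comp (hsq.const_mul_atTop_of_neg (by nlinarith))
  set J₀ := gaussMomentIntegral p
  set J₁ := gaussMomentIntegral (p + 1)
  have hJ₀ := gaussMomentIntegral_mono hp
  have hJ₁ := gaussMomentIntegral_mono (p := p + 1) (by linarith)
  have hJ₀pos := gaussMomentIntegral_pos hp
  have hJ₁pos := gaussMomentIntegral_pos (p := p + 1) (by linarith)
  refine hweight.zero_mul_isBoundedUnder_le (isBoundedUnder_of_eventually_le
    (a := J₀ 0 * exp θ + γ * J₁ 0 * (exp θ + c)) ?_)
  filter_upwards [eventually_le_atBot θ] with x hx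
  have hy : γ * (x - θ) ≤ 0 := mul_nonpos_of_nonneg_of_nonpos hγ.le (by linarith)
  have h₀ : J₀ (γ * (x - θ)) * exp x ≤ J₀ 0 * exp θ :=
    mul_le_mul (hJ₀ hy) (exp_le_exp.2 hx) (exp_pos x).le (hJ₀pos 0).le
  have := hJ₀pos (γ * (x - θ))
  have := hJ₁pos (γ * (x - θ))
  have := hJ₀pos 0
  have := hJ₁pos 0
  have h₁ : γ * J₁ (γ * (x - θ)) * (exp x + c) ≤ γ * J₁ 0 * (exp θ + c) := by
    gcongr
    exact hJ₁ hy
  refine abs_sub_le_of_nonneg_of_le (by positivity) (h₀.trans (le_add_of_nonneg_right ?_))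
    (by positivity) (h₁.trans (le_add_of_nonneg_left ?_))
  all_goals positivity

lemma concaveOn_sub_mul_exp_neg (C μ : ℝ) {K : ℝ} (hK : 0 ≤ K) :
    ConcaveOn ℝ univ fun x => C - μ * x - K * exp (-x) := by
  have hd : ∀ x, HasDerivAt (fun x => C - μ * x - K * exp (-x)) (-μ + K * exp (-x)) x := fun x =>
    ((((hasDerivAt_id x).const_mul μ).const_sub C).sub
      ((hasDerivAt_neg x).exp.const_mul K)).congr_deriv (by ring)
  refine Antitone.concaveOn_univ_of_deriv (fun x => (hd x).differentiableAt) ?_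
  rw [funext fun x => (hd x).deriv]
  intro x y hxy
  dsimp only
  gcongr

lemma eventually_sub_mul_exp_neg_lt_zero_atTop (C : ℝ) {μ K : ℝ} (hμ : 0 < μ) (hK : 0 ≤ K) :
    ∀ᶠ x in atTop, C - μ * x - K * exp (-x) < 0 := by
  filter_upwards [eventually_gt_atTop (C / μ)] with x hx
  have := (div_lt_iff₀ hμ).1 hx
  have : 0 ≤ K * exp (-x) := by positivity
  linarith

lemma eventually_sub_mul_exp_neg_lt_zero_atBot (C μ : ℝ) {K : ℝ} (hK : 0 < K) :
    ∀ᶠ x in atBot, C - μ * x - K * exp (-x) < 0 := by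
  filter_upwards [eventually_lt_atBot (-(2 * (|C| + |μ|) / K + 1))] with x hx
  have hd : 0 ≤ 2 * (|C| + |μ|) / K := by positivity
  have hKt : 2 * (|C| + |μ|) < K * (-x - 1) := (div_lt_iff₀' hK).1 (by linarith)
  have ht : 1 ≤ -x := by linarith
  have hexp := mul_le_mul_of_nonneg_left (quadratic_le_exp_of_nonneg (by linarith : 0 ≤ -x)) hK.le
  nlinarith [mul_lt_mul_of_pos_left hKt (by linarith : (0 : ℝ) < -x), le_abs_self C,
    mul_nonneg (sub_nonneg.2 ht) (abs_nonneg C),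
    mul_le_mul_of_nonneg_right (le_abs_self μ) (by linarith : (0 : ℝ) ≤ -x)]

theorem stmt17_general
    (μ σ θ r c_s c_b : ℝ)
    (hμ : 0 < μ) (hσ : 0 < σ) (hr : 0 < r) (hcs : 0 < c_s) (hcb : 0 < c_b)
    (F : ℝ → ℝ)
    (hF : ∀ x : ℝ, F x = ∫ u in Ioi (0:ℝ),
        u ^ (r / μ - 1) * Real.exp (Real.sqrt (2 * μ / σ ^ 2) * (x - θ) * u - u ^ 2 / 2))
    (f_b : ℝ → ℝ)
    (hfb : ∀ x : ℝ, f_b x = (μ * θ + σ ^ 2 / 2 - r) - μ * x - r * c_b * Real.exp (-x))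
    (bstar : ℝ)
    (hcase :
      (∀ x y : ℝ, f_b x = 0 → f_b y = 0 → x = y) ∨
      (∃ xb1 xb2 a : ℝ, xb1 < xb2 ∧ f_b xb1 = 0 ∧ f_b xb2 = 0 ∧ a ∈ Ioo xb1 xb2 ∧
        F a * Real.exp a = deriv F a * (Real.exp a + c_b) ∧
        (Real.exp bstar - c_s) / F bstar ≤ (Real.exp a + c_b) / F a)) :
    (∀ x : ℝ, x < bstar →
      (Real.exp bstar - c_s) / F bstar ≤ (Real.exp x + c_b) / F x) ∧
    ((∀ x y : ℝ, f_b x = 0 → f_b y = 0 → x = y) →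
      StrictAnti (fun x => (Real.exp x + c_b) / F x)) := by
  set p := r / μ - 1 with hp_def
  set γ := √(2 * μ / σ ^ 2)
  have hp : -1 < p := by linarith [div_pos hr hμ]
  have hγ : 0 < γ := sqrt_pos.2 (by positivity)
  have hγ2 : γ ^ 2 = 2 * μ / σ ^ 2 := sq_sqrt (by positivity)
  obtain rfl : F = fun x => gaussMomentIntegral p (γ * (x - θ)) := funext hF
  obtain rfl : f_b = fun x => (μ * θ + σ ^ 2 / 2 - r) - μ * x - r * c_b * exp (-x) := funext hfb
  set M := abelWronskian (fun x => gaussMomentIntegral p (γ * (x - θ)))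
    (fun x => γ * gaussMomentIntegral (p + 1) (γ * (x - θ))) (γ ^ 2) θ c_b
  have hFpos : ∀ x, 0 < gaussMomentIntegral p (γ * (x - θ)) :=
    fun x => gaussMomentIntegral_pos hp _
  have hA := hasDerivAt_exp_add_div_gaussMoment hp γ θ c_b
  have hM : ∀ x, HasDerivAt M (2 / σ ^ 2 * exp (-(γ ^ 2 / 2) * (x - θ) ^ 2) *
      gaussMomentIntegral p (γ * (x - θ)) * exp x *
      ((μ * θ + σ ^ 2 / 2 - r) - μ * x - r * c_b * exp (-x))) x :=
    fun x => (hasDerivAt_abelWronskian_gaussMoment hp γ θ c_b x).congr_deriv (by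
      rw [hγ2, hp_def]; field_simp; ring)
  have hg : ∀ x, 0 < exp (-(γ ^ 2 / 2) * (x - θ) ^ 2) *
      gaussMomentIntegral p (γ * (x - θ)) ^ 2 := fun x => by have := hFpos x; positivity
  have hk : ∀ x, 0 < 2 / σ ^ 2 * exp (-(γ ^ 2 / 2) * (x - θ) ^ 2) *
      gaussMomentIntegral p (γ * (x - θ)) * exp x := fun x => by have := hFpos x; positivity
  have hlim := tendsto_abelWronskian_gaussMoment_atBot hp hγ θ hcb.le
  have hBA : (exp bstar - c_s) / gaussMomentIntegral p (γ * (bstar - θ)) ≤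
      (exp bstar + c_b) / gaussMomentIntegral p (γ * (bstar - θ)) :=
    div_le_div_of_nonneg_right (by linarith) (hFpos bstar).le
  rcases hcase with hone | ⟨x₁, x₂, a, h12, h₁, h₂, ha, hWa, hBa⟩
  · have hfb_nonpos := nonpos_of_eventually_neg_of_unique_zero (by fun_prop)
      (eventually_sub_mul_exp_neg_lt_zero_atBot _ _ (by positivity))
      (eventually_sub_mul_exp_neg_lt_zero_atTop _ hμ (by positivity)) hone
    have hanti := strictAnti_of_nonpos_of_unique_zero hA hg hM hk hlim hfb_nonpos hone
    exact ⟨fun x hx => hBA.trans (hanti hx).le, fun _ => hanti⟩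
  · have hMa : M a = 0 := by
      simp only [M, abelWronskian, ← (hasDerivAt_gaussMomentIntegral_comp hp γ θ a).deriv, hWa,
        sub_self, mul_zero]
    have hmin := min_le_of_concaveOn hA hg hM hk hlim
      (concaveOn_sub_mul_exp_neg _ _ (by positivity)) h12 h₁ h₂ ⟨ha.1.le, ha.2.le⟩ hMa bstar
    exact ⟨fun x hx => (le_min hBa hBA).trans (hmin x hx.le),
      fun hone => absurd (hone _ _ h₁ h₂) h12.ne⟩

/-- Under (a) f_b has at most one root, or (b) f_b has two distinct
roots x_{b1} < x_{b2} and there is ã* ∈ (x_{b1}, x_{b2}) with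
F(ã*)e^{ã*} = F'(ã*)(e^{ã*} + c_b) and (e^{ã*} + c_b)/F(ã*) ≥ (e^{b*} − c_s)/F(b*):
then (e^x + c_b)/F(x) ≥ (e^{b*} − c_s)/F(b*) for all x < b*. Moreover in case (a)
the map x ↦ (e^x + c_b)/F(x) is strictly decreasing on ℝ. -/
theorem stmt17
    (μ σ θ r c_s c_b : ℝ)
    (hμ : 0 < μ) (hσ : 0 < σ) (hr : 0 < r) (hcs : 0 < c_s) (hcb : 0 < c_b)
    (F G : ℝ → ℝ)
    (hF : ∀ x : ℝ, F x = ∫ u in Ioi (0:ℝ),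
        u ^ (r / μ - 1) * Real.exp (Real.sqrt (2 * μ / σ ^ 2) * (x - θ) * u - u ^ 2 / 2))
    (hG : ∀ x : ℝ, G x = ∫ u in Ioi (0:ℝ),
        u ^ (r / μ - 1) * Real.exp (Real.sqrt (2 * μ / σ ^ 2) * (θ - x) * u - u ^ 2 / 2))
    (f_b : ℝ → ℝ)
    (hfb : ∀ x : ℝ, f_b x = (μ * θ + σ ^ 2 / 2 - r) - μ * x - r * c_b * Real.exp (-x))
    (bstar : ℝ)
    (hb : Real.exp bstar * F bstar = (Real.exp bstar - c_s) * deriv F bstar)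
    (hb_uniq : ∀ b', Real.exp b' * F b' = (Real.exp b' - c_s) * deriv F b' → b' = bstar)
    (hcase :
      (∀ x y : ℝ, f_b x = 0 → f_b y = 0 → x = y) ∨
      (∃ xb1 xb2 a : ℝ, xb1 < xb2 ∧ f_b xb1 = 0 ∧ f_b xb2 = 0 ∧ a ∈ Ioo xb1 xb2 ∧
        F a * Real.exp a = deriv F a * (Real.exp a + c_b) ∧
        (Real.exp bstar - c_s) / F bstar ≤ (Real.exp a + c_b) / F a)) :
    (∀ x : ℝ, x < bstar →
      (Real.exp bstar - c_s) / F bstar ≤ (Real.exp x + c_b) / F x) ∧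
    ((∀ x y : ℝ, f_b x = 0 → f_b y = 0 → x = y) →
      StrictAnti (fun x => (Real.exp x + c_b) / F x)) :=
  stmt17_general μ σ θ r c_s c_b hμ hσ hr hcs hcb F hF f_b hfb bstar hcase
end
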